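/- Invariant traces are independence hypergraphs: let H be a hypergraph on S (an augmented hypergraph with ∅ ∉ H) and let S(H,d) = {s ∈ S : for every σ ∈ H with s ∉ σ, σ ∪ {s} ∈ H} (the set of s for which R_*(H) is ds-invariant). Then the trace H∥_{S(H,d)} is an independence hypergraph on S(H,d): every member of H∥_{S(H,d)} is nonempty, and every finite subset of S(H,d) containing a member of H∥_{S(H,d)} belongs to H∥_{S(H,d)}. Moreover, if L is an independence hypergraph on S (∅ ∉ L and every finite subset of S containing a member of L belongs to L), then S(L,d) = S. -/

import Mathlib

/-!
An augmented hypergraph on a vertex type S is a set of finsets of S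
(`Set (Finset S)`); it is a hypergraph if ∅ ∉ H. `finter σ T` is σ ∩ T for
T ⊆ S and `htrace H T` is the trace H∥_T. `IsAIH T H` says every finite subset
of T containing a hyperedge of H is a hyperedge of H (independence hypergraph
on T; the ambient case uses T = Set.univ). `Sd H = S(H,d)` is the set of
vertices s for which R_*(H) is ds-invariant, described combinatorially.

Adding a vertex of `S(H,d)` to a hyperedge keeps it in `H`, so by induction every hyperedge
stays in `H` after adding any finite subset of `S(H,d)`. Tracing on `T ⊆ S(H,d)`, a finite
`τ ⊆ T` containing the trace of `σ ∈ H` is itself the trace of `σ ∪ τ ∈ H`.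
-/

noncomputable def finter {S : Type*} (σ : Finset S) (T : Set S) : Finset S :=
  @Finset.filter S (fun a => a ∈ T) (Classical.decPred _) σ

noncomputable def htrace {S : Type*} (H : Set (Finset S)) (T : Set S) :
    Set (Finset S) :=
  {τ | (∃ σ ∈ H, finter σ T = τ) ∧ τ ≠ ∅}
    ∪ {τ | τ = ∅ ∧ (∅ : Finset S) ∈ H}

def IsAIH {S : Type*} (T : Set S) (H : Set (Finset S)) : Prop :=
  ∀ σ ∈ H, ∀ τ : Finset S, ↑τ ⊆ T → σ ⊆ τ → τ ∈ H

def Sd {S : Type*} [DecidableEq S] (H : Set (Finset S)) : Set S :=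
  {s | ∀ σ ∈ H, s ∉ σ → insert s σ ∈ H}

section

variable {S : Type*}

theorem mem_finter {σ : Finset S} {T : Set S} {a : S} : a ∈ finter σ T ↔ a ∈ σ ∧ a ∈ T := by
  classical
  unfold finter
  convert Finset.mem_filter

theorem finter_union [DecidableEq S] (σ τ : Finset S) (T : Set S) :
    finter (σ ∪ τ) T = finter σ T ∪ finter τ T := by
  ext a
  simp only [mem_finter, Finset.mem_union, or_and_right]

theorem finter_eq_self {σ : Finset S} {T : Set S} (h : ↑σ ⊆ T) : finter σ T = σ := by
  ext a
  exact mem_finter.trans ⟨And.left, fun ha => ⟨ha, h ha⟩⟩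

theorem htrace_ne_empty {H : Set (Finset S)} (hH : (∅ : Finset S) ∉ H) {T : Set S} :
    ∀ τ ∈ htrace H T, τ ≠ ∅ := by
  rintro τ (⟨-, hτ⟩ | ⟨-, hempty⟩)
  exacts [hτ, absurd hempty hH]

theorem union_mem_of_subset_Sd [DecidableEq S] {H : Set (Finset S)} {σ : Finset S}
    (hσ : σ ∈ H) {τ : Finset S} (hτ : ↑τ ⊆ Sd H) : σ ∪ τ ∈ H := by
  induction τ using Finset.induction_on with
  | empty => simpa using hσ
  | @insert a τ _ ih =>
    rw [Finset.coe_insert, Set.insert_subset_iff] at hτ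
    rw [Finset.union_insert]
    by_cases ha : a ∈ σ ∪ τ
    · rw [Finset.insert_eq_self.2 ha]
      exact ih hτ.2
    · exact hτ.1 _ (ih hτ.2) ha

theorem isAIH_htrace_of_subset_Sd [DecidableEq S] {H : Set (Finset S)} {T : Set S}
    (hT : T ⊆ Sd H) : IsAIH T (htrace H T) := by
  intro ρ hρ τ hτT hρτ
  by_cases hτ : τ = ∅
  · subst hτ
    rcases hρ with ⟨-, hρ⟩ | hρ
    · exact absurd (Finset.subset_empty.1 hρτ) hρ
    · exact Or.inr ⟨rfl, hρ.2⟩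
  obtain ⟨⟨σ, hσ, rfl⟩, -⟩ | ⟨rfl, hempty⟩ := hρ
  · refine Or.inl ⟨⟨σ ∪ τ, union_mem_of_subset_Sd hσ (hτT.trans hT), ?_⟩, hτ⟩
    rw [finter_union, finter_eq_self hτT, Finset.union_eq_right.2 hρτ]
  · refine Or.inl ⟨⟨τ, ?_, finter_eq_self hτT⟩, hτ⟩
    simpa using union_mem_of_subset_Sd hempty (hτT.trans hT)

theorem Sd_eq_univ_of_isAIH_univ [DecidableEq S] {L : Set (Finset S)}
    (hL : IsAIH Set.univ L) : Sd L = Set.univ :=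
  Set.eq_univ_of_forall fun s σ hσ _ =>
    hL σ hσ (insert s σ) (Set.subset_univ _) (Finset.subset_insert s σ)

end

/-- invariant traces are independence hypergraphs: let H be a
hypergraph on S (∅ ∉ H). Then every member of H∥_{S(H,d)} is nonempty and
H∥_{S(H,d)} is an independence hypergraph on S(H,d); moreover if L is an
independence hypergraph on S (∅ ∉ L and L upward closed among finite subsets
of S) then S(L,d) = S. -/
theorem trace_Sd_isAIH {S : Type*} [DecidableEq S] (H : Set (Finset S))
    (hH : (∅ : Finset S) ∉ H) :
    ((∀ τ ∈ htrace H (Sd H), τ ≠ ∅) ∧ IsAIH (Sd H) (htrace H (Sd H)))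
    ∧ (∀ L : Set (Finset S), (∅ : Finset S) ∉ L →
        IsAIH (Set.univ : Set S) L → Sd L = Set.univ) :=
  ⟨⟨htrace_ne_empty hH, isAIH_htrace_of_subset_Sd subset_rfl⟩,
    fun _ _ hL => Sd_eq_univ_of_isAIH_univ hL⟩
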